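/- arXiv:1212.5860 — 2 statements merged into one kernel-verified Lean document; each statement's English description precedes it below -/
import Mathlib

section
/- Let X be a random self-adjoint d×d real matrix satisfying Bernstein's moment condition: E[X^p] ⪯ (p!/2)·B^{p−2}·Σ₂ for all integers p ≥ 2, where B > 0 is a constant and Σ₂ is a positive semi-definite d×d matrix, and the stated expectations exist. Then for all 0 ≤ u < 1/B, log E[exp(uX)] ⪯ u·E[X] + (u²/(2(1−uB)))·Σ₂, where exp and log denote the matrix exponential and logarithm and ⪯ the Loewner (positive semi-definite) order. -/
open MeasureTheory ProbabilityTheory Matrix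
open scoped Matrix.Norms.L2Operator

noncomputable section

/-- The `ℓ`-th largest eigenvalue of a matrix (0-indexed: `eigval A 0` is the largest
eigenvalue), defined for Hermitian matrices via the sorted eigenvalue sequence. -/
def eigval {d : ℕ} (A : Matrix (Fin d) (Fin d) ℝ) (ℓ : Fin d) : ℝ :=
  if h : A.IsHermitian then (h.eigenvalues ∘ Tuple.sort h.eigenvalues) ℓ.rev else 0

/-- `ξ` is a random vector with centered multivariate normal distribution `N_d(0, C)`:
every linear functional `⟨a, ξ⟩` is a centered real Gaussian with variance `aᵀ C a`. -/
def IsGaussianVec {Ω : Type*} [MeasurableSpace Ω] (P : Measure Ω) {d : ℕ}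
    (ξ : Ω → (Fin d → ℝ)) (C : Matrix (Fin d) (Fin d) ℝ) : Prop :=
  Measurable ξ ∧ ∀ a : Fin d → ℝ,
    P.map (fun ω => a ⬝ᵥ ξ ω) = gaussianReal 0 (a ⬝ᵥ C.mulVec a).toNNReal

/-- Outer product `x xᵀ` of a vector with itself. -/
def outer {d : ℕ} (x : Fin d → ℝ) : Matrix (Fin d) (Fin d) ℝ := Matrix.vecMulVec x x

/-- Entrywise expectation of a random matrix. -/
def mExp {Ω : Type*} [MeasurableSpace Ω] (P : Measure Ω) {d : ℕ}
    (X : Ω → Matrix (Fin d) (Fin d) ℝ) : Matrix (Fin d) (Fin d) ℝ :=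
  Matrix.of fun i j => ∫ ω, X ω i j ∂P

/-- Loewner order: `A ⪯ B` iff `B - A` is positive semidefinite. -/
def LoewnerLE {d : ℕ} (A B : Matrix (Fin d) (Fin d) ℝ) : Prop := (B - A).PosSemidef

/-- Matrix exponential of a Hermitian matrix (via the functional calculus). -/
def matExp {d : ℕ} (A : Matrix (Fin d) (Fin d) ℝ) : Matrix (Fin d) (Fin d) ℝ :=
  if h : A.IsHermitian then h.cfc Real.exp else 0

/-- Matrix logarithm of a (positive definite) Hermitian matrix (via the functional calculus). -/
def matLog {d : ℕ} (A : Matrix (Fin d) (Fin d) ℝ) : Matrix (Fin d) (Fin d) ℝ :=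
  if h : A.IsHermitian then h.cfc Real.log else 0

instance matrixMeasurableSpace {d : ℕ} : MeasurableSpace (Matrix (Fin d) (Fin d) ℝ) :=
  (inferInstance : MeasurableSpace (Fin d → Fin d → ℝ))

end

section BernsteinHelpers

/-- The tail of the exponential series. -/
lemma aux_hasSum_exp (x : ℝ) :
    HasSum (fun n : ℕ => x ^ (n + 2) / ((n + 2).factorial : ℝ)) (Real.exp x - 1 - x) := by
  have h : HasSum (fun n : ℕ => x ^ n / (n.factorial : ℝ)) (Real.exp x) := by
    have hs := (Real.summable_pow_div_factorial x).hasSum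
    have he : ∑' n : ℕ, x ^ n / (n.factorial : ℝ) = Real.exp x := by
      rw [Real.exp_eq_exp_ℝ, NormedSpace.exp_eq_tsum_div]
    rwa [he] at hs
  have h2 := (hasSum_nat_add_iff' (f := fun n : ℕ => x ^ n / (n.factorial : ℝ)) 2).mpr h
  have h3 : Real.exp x - ∑ i ∈ Finset.range 2, x ^ i / (i.factorial : ℝ)
      = Real.exp x - 1 - x := by
    rw [Finset.sum_range_succ, Finset.sum_range_one]
    simp [Nat.factorial]
    ring
  rwa [h3] at h2

/-- Quadratic forms of the Hermitian functional calculus, via the spectral decomposition. -/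
lemma herm_repr {d : ℕ} {Y : Matrix (Fin d) (Fin d) ℝ} (hY : Y.IsHermitian) (a : Fin d → ℝ) :
    ∃ v : Fin d → ℝ, ∀ f : ℝ → ℝ,
      a ⬝ᵥ (hY.cfc f) *ᵥ a = ∑ i, f (hY.eigenvalues i) * v i ^ 2 := by
  classical
  set U : Matrix (Fin d) (Fin d) ℝ := (hY.eigenvectorUnitary : Matrix (Fin d) (Fin d) ℝ) with hU
  refine ⟨fun i => (star U *ᵥ a) i, fun f => ?_⟩
  have h1 : hY.cfc f = U * (Matrix.diagonal (f ∘ hY.eigenvalues)) * star U := by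
    rw [Matrix.IsHermitian.cfc, RCLike.ofReal_real_eq_id]
    rfl
  have hvm : a ᵥ* U = star U *ᵥ a := by
    ext i
    simp [Matrix.vecMul, Matrix.mulVec, dotProduct, Matrix.star_apply, mul_comm]
  rw [h1, mul_assoc, ← Matrix.mulVec_mulVec, ← Matrix.mulVec_mulVec,
    Matrix.dotProduct_mulVec, hvm]
  simp only [dotProduct, Matrix.mulVec_diagonal, Function.comp_apply]
  exact Finset.sum_congr rfl fun i _ => by ring

/-- Spectral representation for powers, `matExp` and `matLog` simultaneously. -/
lemma herm_repr_full {d : ℕ} {Y : Matrix (Fin d) (Fin d) ℝ} (hY : Y.IsHermitian)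
    (a : Fin d → ℝ) :
    ∃ v : Fin d → ℝ,
      (∀ p : ℕ, a ⬝ᵥ (Y ^ p) *ᵥ a = ∑ i, hY.eigenvalues i ^ p * v i ^ 2) ∧
      (a ⬝ᵥ (matExp Y) *ᵥ a = ∑ i, Real.exp (hY.eigenvalues i) * v i ^ 2) ∧
      (a ⬝ᵥ (matLog Y) *ᵥ a = ∑ i, Real.log (hY.eigenvalues i) * v i ^ 2) ∧
      (a ⬝ᵥ a = ∑ i, v i ^ 2) := by
  obtain ⟨v, hv⟩ := herm_repr hY a
  have hpow : ∀ p : ℕ, a ⬝ᵥ (Y ^ p) *ᵥ a = ∑ i, hY.eigenvalues i ^ p * v i ^ 2 := by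
    intro p
    rw [← cfc_pow_id (R := ℝ) Y p hY.isSelfAdjoint, hY.cfc_eq]
    exact hv _
  refine ⟨v, hpow, ?_, ?_, ?_⟩
  · simp only [matExp, dif_pos hY]; exact hv _
  · simp only [matLog, dif_pos hY]; exact hv _
  · have h0 := hpow 0
    simpa [Matrix.one_mulVec] using h0

lemma abs_pow_le_even (x : ℝ) (p : ℕ) :
    |x| ^ p ≤ x ^ (2 * (p / 2)) + x ^ (2 * ((p + 1) / 2)) := by
  have he : ∀ k : ℕ, |x| ^ (2 * k) = x ^ (2 * k) := fun k => by
    rw [pow_mul, pow_mul, sq_abs]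
  have hnn : ∀ k : ℕ, (0 : ℝ) ≤ x ^ (2 * k) := fun k => by
    rw [pow_mul]; exact pow_nonneg (sq_nonneg x) k
  rcases Nat.even_or_odd p with ⟨k, hk⟩ | ⟨k, hk⟩
  · have h1 : 2 * (p / 2) = p := by omega
    have h2 : 2 * ((p + 1) / 2) = p := by omega
    have h3 : p = 2 * k := by omega
    rw [h1, h2, h3, he k]
    exact le_add_of_nonneg_right (hnn k)
  · have h1 : 2 * (p / 2) = 2 * k := by omega
    have h2 : 2 * ((p + 1) / 2) = 2 * (k + 1) := by omega
    rw [h1, h2]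
    rcases le_or_gt |x| 1 with h | h
    · calc |x| ^ p ≤ |x| ^ (2 * k) :=
            pow_le_pow_of_le_one (abs_nonneg x) h (by omega)
        _ = x ^ (2 * k) := he k
        _ ≤ _ := le_add_of_nonneg_right (hnn (k + 1))
    · calc |x| ^ p ≤ |x| ^ (2 * (k + 1)) :=
            pow_le_pow_right₀ h.le (by omega)
        _ = x ^ (2 * (k + 1)) := he (k + 1)
        _ ≤ _ := le_add_of_nonneg_left (hnn k)

lemma q_abs_le {d : ℕ} {Y : Matrix (Fin d) (Fin d) ℝ} (hY : Y.IsHermitian) (a : Fin d → ℝ)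
    (p : ℕ) :
    |a ⬝ᵥ (Y ^ p) *ᵥ a| ≤
      a ⬝ᵥ (Y ^ (2 * (p / 2))) *ᵥ a + a ⬝ᵥ (Y ^ (2 * ((p + 1) / 2))) *ᵥ a := by
  obtain ⟨v, hpow, -, -, -⟩ := herm_repr_full hY a
  rw [hpow, hpow, hpow, ← Finset.sum_add_distrib]
  refine (Finset.abs_sum_le_sum_abs _ _).trans (Finset.sum_le_sum fun i _ => ?_)
  rw [abs_mul, abs_pow, abs_of_nonneg (sq_nonneg (v i))]
  calc |hY.eigenvalues i| ^ p * v i ^ 2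
      ≤ (hY.eigenvalues i ^ (2 * (p / 2)) + hY.eigenvalues i ^ (2 * ((p + 1) / 2))) * v i ^ 2 :=
        mul_le_mul_of_nonneg_right (abs_pow_le_even _ p) (sq_nonneg _)
    _ = _ := by ring

lemma key_pointwise {d : ℕ} {Y : Matrix (Fin d) (Fin d) ℝ} (hY : Y.IsHermitian)
    (a : Fin d → ℝ) :
    HasSum (fun n : ℕ => (a ⬝ᵥ (Y ^ (n + 2)) *ᵥ a) / ((n + 2).factorial : ℝ))
      (a ⬝ᵥ (matExp Y) *ᵥ a - a ⬝ᵥ a - a ⬝ᵥ Y *ᵥ a) := by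
  obtain ⟨v, hpow, hexp, -, hone⟩ := herm_repr_full hY a
  have hY1 : a ⬝ᵥ Y *ᵥ a = ∑ i, hY.eigenvalues i * v i ^ 2 := by
    simpa [pow_one] using hpow 1
  rw [hexp, hone, hY1]
  have hcomb : ((∑ i, Real.exp (hY.eigenvalues i) * v i ^ 2) - ∑ i, v i ^ 2) -
      (∑ i, hY.eigenvalues i * v i ^ 2)
      = ∑ i, (Real.exp (hY.eigenvalues i) - 1 - hY.eigenvalues i) * v i ^ 2 := by
    rw [← Finset.sum_sub_distrib, ← Finset.sum_sub_distrib]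
    exact Finset.sum_congr rfl fun i _ => by ring
  rw [hcomb]
  have hterm : ∀ i : Fin d, HasSum
      (fun n : ℕ => (hY.eigenvalues i ^ (n + 2) / ((n + 2).factorial : ℝ)) * v i ^ 2)
      ((Real.exp (hY.eigenvalues i) - 1 - hY.eigenvalues i) * v i ^ 2) :=
    fun i => (aux_hasSum_exp _).mul_right _
  have hs := hasSum_sum (s := Finset.univ) (f := fun i (n : ℕ) =>
      (hY.eigenvalues i ^ (n + 2) / ((n + 2).factorial : ℝ)) * v i ^ 2)
      (fun i _ => hterm i)
  have hfun : (fun n : ℕ => (a ⬝ᵥ (Y ^ (n + 2)) *ᵥ a) / ((n + 2).factorial : ℝ))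
      = fun n => ∑ i, (hY.eigenvalues i ^ (n + 2) / ((n + 2).factorial : ℝ)) * v i ^ 2 := by
    funext n
    rw [hpow, Finset.sum_div]
    exact Finset.sum_congr rfl fun i _ => by ring
  rw [hfun]
  exact hs

lemma herm_smul {d : ℕ} {A : Matrix (Fin d) (Fin d) ℝ} (hA : A.IsHermitian) (r : ℝ) :
    (r • A).IsHermitian := by
  unfold Matrix.IsHermitian at *
  rw [Matrix.conjTranspose_smul, hA]
  simp

lemma matExp_herm {d : ℕ} {Y : Matrix (Fin d) (Fin d) ℝ} (hY : Y.IsHermitian) :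
    (matExp Y).IsHermitian := by
  simp only [matExp, dif_pos hY]
  rw [← hY.cfc_eq]
  exact cfc_predicate Real.exp Y

lemma matLog_herm {d : ℕ} {Y : Matrix (Fin d) (Fin d) ℝ} (hY : Y.IsHermitian) :
    (matLog Y).IsHermitian := by
  simp only [matLog, dif_pos hY]
  rw [← hY.cfc_eq]
  exact cfc_predicate Real.log Y

lemma mExp_herm {Ω : Type*} [MeasurableSpace Ω] (P : MeasureTheory.Measure Ω) {d : ℕ}
    (F : Ω → Matrix (Fin d) (Fin d) ℝ) (hF : ∀ ω, (F ω).IsHermitian) :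
    (mExp P F).IsHermitian := by
  apply Matrix.IsHermitian.ext
  intro i j
  simp only [mExp, Matrix.of_apply, star_trivial]
  exact MeasureTheory.integral_congr_ae (Filter.Eventually.of_forall fun ω => by
    simpa using (hF ω).apply i j)

lemma q_integral {Ω : Type*} [MeasurableSpace Ω] (P : MeasureTheory.Measure Ω) {d : ℕ}
    (F : Ω → Matrix (Fin d) (Fin d) ℝ)
    (hF : ∀ i j, MeasureTheory.Integrable (fun ω => F ω i j) P) (a : Fin d → ℝ) :
    MeasureTheory.Integrable (fun ω => a ⬝ᵥ (F ω) *ᵥ a) P ∧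
      (∫ ω, a ⬝ᵥ (F ω) *ᵥ a ∂P) = a ⬝ᵥ (mExp P F) *ᵥ a := by
  have h1 : ∀ A : Matrix (Fin d) (Fin d) ℝ,
      a ⬝ᵥ A *ᵥ a = ∑ i, ∑ j, a i * a j * A i j := by
    intro A
    simp only [dotProduct, Matrix.mulVec, Finset.mul_sum]
    exact Finset.sum_congr rfl fun i _ => Finset.sum_congr rfl fun j _ => by ring
  have hfun : (fun ω => a ⬝ᵥ (F ω) *ᵥ a) = fun ω => ∑ i, ∑ j, a i * a j * F ω i j :=
    funext fun ω => h1 (F ω)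
  have hint : ∀ (i j : Fin d),
      MeasureTheory.Integrable (fun ω => a i * a j * F ω i j) P :=
    fun i j => (hF i j).const_mul (a i * a j)
  constructor
  · rw [hfun]
    exact MeasureTheory.integrable_finset_sum _ fun i _ =>
      MeasureTheory.integrable_finset_sum _ fun j _ => hint i j
  · rw [hfun, h1 (mExp P F)]
    rw [MeasureTheory.integral_finset_sum _ fun i _ =>
      MeasureTheory.integrable_finset_sum _ fun j _ => hint i j]
    refine Finset.sum_congr rfl fun i _ => ?_
    rw [MeasureTheory.integral_finset_sum _ fun j _ => hint i j]
    refine Finset.sum_congr rfl fun j _ => ?_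
    rw [MeasureTheory.integral_const_mul]
    rfl

lemma term_le {B u : ℝ} (hB : 0 < B) (hu0 : 0 ≤ u) {p e : ℕ} (hp : 1 ≤ p) (he2 : 2 ≤ e)
    (hpe : p - 1 ≤ e) (hep : e ≤ p + 1) :
    u ^ p * (e.factorial : ℝ) * B ^ (e - 2) / (p.factorial : ℝ) ≤
      ((p : ℝ) + 1) * u * (1 + B) ^ 2 * (u * B) ^ (p - 1) / B ^ 2 := by
  obtain ⟨p1, rfl⟩ : ∃ p1, p = p1 + 1 := ⟨p - 1, by omega⟩
  obtain ⟨k, hk, hke⟩ : ∃ k, k ≤ 2 ∧ e = p1 + k := ⟨e - p1, by omega, by omega⟩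
  have hp1 : (p1 + 1) - 1 = p1 := by omega
  rw [hp1]
  have hBe : (B : ℝ) ^ (e - 2) = B ^ p1 * B ^ k / B ^ 2 := by
    rw [eq_div_iff (by positivity), ← pow_add, ← pow_add]
    congr 1
    omega
  have hfac : (e.factorial : ℝ) ≤ ((p1 : ℝ) + 2) * ((p1 + 1).factorial : ℝ) := by
    have h := Nat.factorial_le (show e ≤ p1 + 2 by omega)
    calc (e.factorial : ℝ) ≤ ((p1 + 2).factorial : ℝ) := by exact_mod_cast h
      _ = ((p1 : ℝ) + 2) * ((p1 + 1).factorial : ℝ) := by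
          rw [show p1 + 2 = (p1 + 1) + 1 from rfl, Nat.factorial_succ]
          push_cast
          ring
  have hBk : (B : ℝ) ^ k ≤ (1 + B) ^ 2 := by
    calc (B : ℝ) ^ k ≤ (1 + B) ^ k := pow_le_pow_left₀ hB.le (by linarith) k
      _ ≤ (1 + B) ^ 2 := pow_le_pow_right₀ (by linarith) hk
  have hfacpos : (0 : ℝ) < ((p1 + 1).factorial : ℝ) := by
    exact_mod_cast Nat.factorial_pos _
  have key : u ^ (p1 + 1) * (e.factorial : ℝ) * B ^ (e - 2) / ((p1 + 1).factorial : ℝ)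
      = (u * (u * B) ^ p1 / B ^ 2) * ((e.factorial : ℝ) / ((p1 + 1).factorial : ℝ)) *
        B ^ k := by
    rw [hBe, mul_pow, pow_succ]
    field_simp
  rw [key]
  have hq : (e.factorial : ℝ) / ((p1 + 1).factorial : ℝ) ≤ (p1 : ℝ) + 2 := by
    rw [div_le_iff₀ hfacpos]
    exact hfac
  have hA : (0 : ℝ) ≤ u * (u * B) ^ p1 / B ^ 2 := by positivity
  calc (u * (u * B) ^ p1 / B ^ 2) * ((e.factorial : ℝ) / ((p1 + 1).factorial : ℝ)) * B ^ k
      ≤ (u * (u * B) ^ p1 / B ^ 2) * (((p1 : ℝ) + 2)) * ((1 + B) ^ 2) := by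
        apply mul_le_mul
        · exact mul_le_mul_of_nonneg_left hq hA
        · exact hBk
        · positivity
        · positivity
    _ = (((p1 + 1 : ℕ) : ℝ) + 1) * u * (1 + B) ^ 2 * (u * B) ^ p1 / B ^ 2 := by
        push_cast
        ring

end BernsteinHelpers

theorem matrix_bernstein_log_mgf_bound
    {Ω : Type*} [MeasurableSpace Ω] (P : Measure Ω) [IsProbabilityMeasure P]
    {d : ℕ} (X : Ω → Matrix (Fin d) (Fin d) ℝ)
    (hXmeas : Measurable X) (hXherm : ∀ ω, (X ω).IsHermitian)
    (B : ℝ) (hB : 0 < B)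
    (V : Matrix (Fin d) (Fin d) ℝ) (hV : V.PosSemidef)
    -- the stated expectations exist
    (hintpow : ∀ (p : ℕ) (i j : Fin d), Integrable (fun ω => ((X ω) ^ p) i j) P)
    (hintexp : ∀ (u : ℝ) (i j : Fin d), Integrable (fun ω => matExp (u • X ω) i j) P)
    -- Bernstein's moment condition
    (hmom : ∀ p : ℕ, 2 ≤ p →
      LoewnerLE (mExp P (fun ω => (X ω) ^ p)) (((p.factorial : ℝ) / 2) • B ^ (p - 2) • V))
    (u : ℝ) (hu0 : 0 ≤ u) (hu : u < 1 / B) :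
    LoewnerLE (matLog (mExp P (fun ω => matExp (u • X ω))))
      (u • mExp P X + (u ^ 2 / (2 * (1 - u * B))) • V) := by
  classical
  have hr1 : u * B < 1 := (lt_div_iff₀ hB).mp hu
  have hr0 : 0 ≤ u * B := mul_nonneg hu0 hB.le
  have h1r : 0 < 1 - u * B := by linarith
  have hstar : ∀ x : Fin d → ℝ, star x = x := fun x => rfl
  have hYh : ∀ ω, (u • X ω).IsHermitian := fun ω => herm_smul (hXherm ω) u
  have hMh : (mExp P (fun ω => matExp (u • X ω))).IsHermitian :=
    mExp_herm P _ fun ω => matExp_herm (hYh ω)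
  have hEXh : (mExp P X).IsHermitian := mExp_herm P X hXherm
  have hXint1 : ∀ i j, Integrable (fun ω => X ω i j) P := fun i j => by
    simpa [pow_one] using hintpow 1 i j
  -- Step 1 : quadratic-form bound on E[exp(uX)] - I - u E[X]
  have step1 : ∀ a : Fin d → ℝ,
      a ⬝ᵥ (mExp P (fun ω => matExp (u • X ω))) *ᵥ a - a ⬝ᵥ a
          - u * (a ⬝ᵥ (mExp P X) *ᵥ a)
        ≤ u ^ 2 / (2 * (1 - u * B)) * (a ⬝ᵥ V *ᵥ a) := by
    intro a
    set c := a ⬝ᵥ V *ᵥ a with hc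
    have hc0 : 0 ≤ c := by
      have := hV.dotProduct_mulVec_nonneg a
      rwa [hstar a] at this
    have hq : ∀ p : ℕ, Integrable (fun ω => a ⬝ᵥ (X ω ^ p) *ᵥ a) P :=
      fun p => (q_integral P (fun ω => X ω ^ p) (hintpow p) a).1
    have hqeq : ∀ p : ℕ,
        (∫ ω, a ⬝ᵥ (X ω ^ p) *ᵥ a ∂P) = a ⬝ᵥ (mExp P fun ω => X ω ^ p) *ᵥ a :=
      fun p => (q_integral P (fun ω => X ω ^ p) (hintpow p) a).2
    have mom : ∀ e : ℕ, 2 ≤ e →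
        (∫ ω, a ⬝ᵥ (X ω ^ e) *ᵥ a ∂P) ≤ (e.factorial : ℝ) / 2 * B ^ (e - 2) * c := by
      intro e he
      obtain ⟨-, h⟩ := hmom e he
      have h2 := Matrix.PosSemidef.dotProduct_mulVec_nonneg (hmom e he) a
      rw [hstar a] at h2
      simp only [Matrix.sub_mulVec, dotProduct_sub, Matrix.smul_mulVec,
        dotProduct_smul, smul_eq_mul] at h2
      rw [hqeq e]
      rw [← hc] at h2
      linarith [h2]
    set F : ℕ → Ω → ℝ := fun n ω =>
      (u ^ (n + 2) / ((n + 2).factorial : ℝ)) * (a ⬝ᵥ (X ω ^ (n + 2)) *ᵥ a) with hF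
    have hFint : ∀ n, Integrable (F n) P := fun n => (hq (n + 2)).const_mul _
    set K : ℕ → ℝ := fun n =>
      (((n : ℝ) + 2) + 1) * u * (1 + B) ^ 2 * (u * B) ^ (n + 1) / B ^ 2 * c with hK
    have hnormle : ∀ n : ℕ, (∫ ω, ‖F n ω‖ ∂P) ≤ K n := by
      intro n
      have hcoeff : (0 : ℝ) ≤ u ^ (n + 2) / ((n + 2).factorial : ℝ) := by positivity
      have he1 : 2 ≤ 2 * ((n + 2) / 2) := by omega
      have he2 : 2 ≤ 2 * ((n + 2 + 1) / 2) := by omega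
      have habs : ∀ ω, |a ⬝ᵥ (X ω ^ (n + 2)) *ᵥ a| ≤
          a ⬝ᵥ (X ω ^ (2 * ((n + 2) / 2))) *ᵥ a
            + a ⬝ᵥ (X ω ^ (2 * ((n + 2 + 1) / 2))) *ᵥ a :=
        fun ω => q_abs_le (hXherm ω) a (n + 2)
      have hnorm_eq : ∀ ω, ‖F n ω‖ = (u ^ (n + 2) / ((n + 2).factorial : ℝ)) *
          |a ⬝ᵥ (X ω ^ (n + 2)) *ᵥ a| := by
        intro ω
        simp only [hF]
        rw [Real.norm_eq_abs, abs_mul, abs_of_nonneg hcoeff]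
      have ht1 := term_le hB hu0 (p := n + 2) (e := 2 * ((n + 2) / 2))
        (by omega) he1 (by omega) (by omega)
      have ht2 := term_le hB hu0 (p := n + 2) (e := 2 * ((n + 2 + 1) / 2))
        (by omega) he2 (by omega) (by omega)
      have hsub : n + 2 - 1 = n + 1 := rfl
      rw [hsub] at ht1 ht2
      have hc2 : (0 : ℝ) ≤ c / 2 := by linarith
      calc (∫ ω, ‖F n ω‖ ∂P)
          = (u ^ (n + 2) / ((n + 2).factorial : ℝ)) *
            ∫ ω, |a ⬝ᵥ (X ω ^ (n + 2)) *ᵥ a| ∂P := by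
            rw [integral_congr_ae (Filter.Eventually.of_forall hnorm_eq),
              MeasureTheory.integral_const_mul]
        _ ≤ (u ^ (n + 2) / ((n + 2).factorial : ℝ)) *
            (((2 * ((n + 2) / 2)).factorial : ℝ) / 2 * B ^ (2 * ((n + 2) / 2) - 2) * c +
             ((2 * ((n + 2 + 1) / 2)).factorial : ℝ) / 2 * B ^ (2 * ((n + 2 + 1) / 2) - 2) * c) := by
            refine mul_le_mul_of_nonneg_left ?_ hcoeff
            calc (∫ ω, |a ⬝ᵥ (X ω ^ (n + 2)) *ᵥ a| ∂P)
                ≤ ∫ ω, (a ⬝ᵥ (X ω ^ (2 * ((n + 2) / 2))) *ᵥ a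
                    + a ⬝ᵥ (X ω ^ (2 * ((n + 2 + 1) / 2))) *ᵥ a) ∂P :=
                  integral_mono ((hq (n + 2)).abs) ((hq _).add (hq _)) habs
              _ = (∫ ω, a ⬝ᵥ (X ω ^ (2 * ((n + 2) / 2))) *ᵥ a ∂P)
                    + ∫ ω, a ⬝ᵥ (X ω ^ (2 * ((n + 2 + 1) / 2))) *ᵥ a ∂P :=
                  integral_add (hq _) (hq _)
              _ ≤ _ := add_le_add (mom _ he1) (mom _ he2)
        _ = (u ^ (n + 2) * ((2 * ((n + 2) / 2)).factorial : ℝ) *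
              B ^ (2 * ((n + 2) / 2) - 2) / ((n + 2).factorial : ℝ)) * (c / 2)
            + (u ^ (n + 2) * ((2 * ((n + 2 + 1) / 2)).factorial : ℝ) *
              B ^ (2 * ((n + 2 + 1) / 2) - 2) / ((n + 2).factorial : ℝ)) * (c / 2) := by
            ring
        _ ≤ (((n + 2 : ℕ) : ℝ) + 1) * u * (1 + B) ^ 2 * (u * B) ^ (n + 1) / B ^ 2 * (c / 2)
            + (((n + 2 : ℕ) : ℝ) + 1) * u * (1 + B) ^ 2 * (u * B) ^ (n + 1) / B ^ 2 * (c / 2) :=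
            add_le_add (mul_le_mul_of_nonneg_right ht1 hc2)
              (mul_le_mul_of_nonneg_right ht2 hc2)
        _ = K n := by
            simp only [hK]
            push_cast
            ring
    have hKsum : Summable K := by
      have h1 : Summable (fun n : ℕ => (n : ℝ) * (u * B) ^ n) := by
        have := summable_pow_mul_geometric_of_norm_lt_one (R := ℝ) 1
          (r := u * B) (by rw [Real.norm_eq_abs, abs_of_nonneg hr0]; exact hr1)
        simpa using this
      have h2 : Summable (fun n : ℕ => (u * B) ^ n) :=
        summable_geometric_of_lt_one hr0 hr1
      have h3 : Summable (fun n : ℕ =>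
          (u * (1 + B) ^ 2 / B ^ 2 * c * (u * B)) *
            ((n : ℝ) * (u * B) ^ n + 3 * (u * B) ^ n)) :=
        (h1.add (h2.mul_left 3)).mul_left _
      refine h3.congr fun n => ?_
      simp only [hK]
      push_cast
      ring
    have hnorm_sum : Summable (fun n => ∫ ω, ‖F n ω‖ ∂P) :=
      Summable.of_nonneg_of_le (fun n => integral_nonneg fun ω => norm_nonneg _)
        hnormle hKsum
    have hswap := hasSum_integral_of_summable_integral_norm hFint hnorm_sum
    have hIle : ∀ n : ℕ, (∫ ω, F n ω ∂P) ≤ u ^ 2 * c / 2 * (u * B) ^ n := by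
      intro n
      have hcoeff : (0 : ℝ) ≤ u ^ (n + 2) / ((n + 2).factorial : ℝ) := by positivity
      have hfne : ((n + 2).factorial : ℝ) ≠ 0 :=
        Nat.cast_ne_zero.mpr (Nat.factorial_ne_zero _)
      have h22 : n + 2 - 2 = n := rfl
      calc (∫ ω, F n ω ∂P)
          = (u ^ (n + 2) / ((n + 2).factorial : ℝ)) *
            ∫ ω, a ⬝ᵥ (X ω ^ (n + 2)) *ᵥ a ∂P := by
            simp only [hF]
            rw [MeasureTheory.integral_const_mul]
        _ ≤ (u ^ (n + 2) / ((n + 2).factorial : ℝ)) *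
            (((n + 2).factorial : ℝ) / 2 * B ^ (n + 2 - 2) * c) :=
            mul_le_mul_of_nonneg_left (mom (n + 2) (by omega)) hcoeff
        _ = u ^ 2 * c / 2 * (u * B) ^ n := by
            rw [h22]
            field_simp
            ring
    have hsummInt : Summable (fun n => ∫ ω, F n ω ∂P) := hswap.summable
    have htsum : (∑' n, ∫ ω, F n ω ∂P) ≤ u ^ 2 * c / 2 * (1 - u * B)⁻¹ := by
      have hgs : Summable (fun n : ℕ => u ^ 2 * c / 2 * (u * B) ^ n) :=
        (summable_geometric_of_lt_one hr0 hr1).mul_left _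
      calc (∑' n, ∫ ω, F n ω ∂P)
          ≤ ∑' n : ℕ, u ^ 2 * c / 2 * (u * B) ^ n := Summable.tsum_le_tsum hIle hsummInt hgs
        _ = u ^ 2 * c / 2 * (1 - u * B)⁻¹ := by
            rw [tsum_mul_left, tsum_geometric_of_lt_one hr0 hr1]
    have hpt : ∀ ω, (∑' n, F n ω)
        = a ⬝ᵥ (matExp (u • X ω)) *ᵥ a - a ⬝ᵥ a - u * (a ⬝ᵥ (X ω) *ᵥ a) := by
      intro ω
      have h := key_pointwise (hYh ω) a
      have heq : (fun n : ℕ => (a ⬝ᵥ ((u • X ω) ^ (n + 2)) *ᵥ a) / ((n + 2).factorial : ℝ))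
          = fun n => F n ω := by
        funext n
        simp only [hF]
        rw [smul_pow, Matrix.smul_mulVec, dotProduct_smul, smul_eq_mul]
        ring
      have h2 : a ⬝ᵥ (u • X ω) *ᵥ a = u * (a ⬝ᵥ (X ω) *ᵥ a) := by
        rw [Matrix.smul_mulVec, dotProduct_smul, smul_eq_mul]
      rw [heq, h2] at h
      exact h.tsum_eq
    have hintexp_q := q_integral P (fun ω => matExp (u • X ω)) (hintexp u) a
    have hqX := q_integral P X hXint1 a
    have hMint : (∫ ω, (a ⬝ᵥ (matExp (u • X ω)) *ᵥ a - a ⬝ᵥ a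
          - u * (a ⬝ᵥ (X ω) *ᵥ a)) ∂P)
        = a ⬝ᵥ (mExp P (fun ω => matExp (u • X ω))) *ᵥ a - a ⬝ᵥ a
          - u * (a ⬝ᵥ (mExp P X) *ᵥ a) := by
      have i0 : Integrable (fun _ : Ω => a ⬝ᵥ a) P := integrable_const (a ⬝ᵥ a)
      have i1 : Integrable (fun ω => a ⬝ᵥ (matExp (u • X ω)) *ᵥ a - a ⬝ᵥ a) P :=
        hintexp_q.1.sub i0
      have i2 : Integrable (fun ω => u * (a ⬝ᵥ (X ω) *ᵥ a)) P := (hqX.1).const_mul u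
      rw [integral_sub i1 i2, integral_sub hintexp_q.1 i0,
        MeasureTheory.integral_const_mul, hintexp_q.2, hqX.2, integral_const]
      simp [measure_univ]
    have hptint : (∫ ω, (a ⬝ᵥ (matExp (u • X ω)) *ᵥ a - a ⬝ᵥ a
          - u * (a ⬝ᵥ (X ω) *ᵥ a)) ∂P) = ∑' n, ∫ ω, F n ω ∂P := by
      rw [hswap.tsum_eq]
      exact integral_congr_ae (Filter.Eventually.of_forall fun ω => (hpt ω).symm)
    have hchain : a ⬝ᵥ (mExp P (fun ω => matExp (u • X ω))) *ᵥ a - a ⬝ᵥ a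
        - u * (a ⬝ᵥ (mExp P X) *ᵥ a) ≤ u ^ 2 * c / 2 * (1 - u * B)⁻¹ := by
      rw [← hMint, hptint]
      exact htsum
    have heqc : u ^ 2 * c / 2 * (1 - u * B)⁻¹ = u ^ 2 / (2 * (1 - u * B)) * c := by
      field_simp
    linarith [hchain]
  -- Positive definiteness of the matrix mgf
  have hMpd : (mExp P (fun ω => matExp (u • X ω))).PosDef := by
    refine Matrix.PosDef.of_dotProduct_mulVec_pos hMh fun x hx => ?_
    rw [hstar x]
    have hqx := q_integral P (fun ω => matExp (u • X ω)) (hintexp u) x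
    rw [← hqx.2]
    have hpos : ∀ ω, 0 < x ⬝ᵥ (matExp (u • X ω)) *ᵥ x := by
      intro ω
      obtain ⟨v, hpow, hexp, -, hone⟩ := herm_repr_full (hYh ω) x
      rw [hexp]
      have hxx : (0 : ℝ) < ∑ i, v i ^ 2 := by
        rw [← hone]
        have h0 : 0 ≤ x ⬝ᵥ x := Finset.sum_nonneg fun i _ => mul_self_nonneg (x i)
        have hne : x ⬝ᵥ x ≠ 0 := fun h => hx (dotProduct_self_eq_zero.mp h)
        exact lt_of_le_of_ne h0 (Ne.symm hne)
      obtain ⟨i, hi⟩ : ∃ i, v i ≠ 0 := by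
        by_contra hno
        push_neg at hno
        rw [Finset.sum_eq_zero (fun i _ => by rw [hno i]; ring)] at hxx
        exact lt_irrefl _ hxx
      exact Finset.sum_pos' (fun j _ => mul_nonneg (Real.exp_pos _).le (sq_nonneg _))
        ⟨i, Finset.mem_univ i, mul_pos (Real.exp_pos _) (by positivity)⟩
    refine (integral_pos_iff_support_of_nonneg (fun ω => (hpos ω).le) hqx.1).mpr ?_
    have hsupp : Function.support (fun ω => x ⬝ᵥ (matExp (u • X ω)) *ᵥ x) = Set.univ :=
      Set.eq_univ_iff_forall.mpr fun ω => (hpos ω).ne'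
    rw [hsupp]
    simp [measure_univ]
  -- Step 2 : log M ⪯ M - 1, in quadratic form
  have step2 : ∀ a : Fin d → ℝ,
      a ⬝ᵥ (matLog (mExp P (fun ω => matExp (u • X ω)))) *ᵥ a
        ≤ a ⬝ᵥ (mExp P (fun ω => matExp (u • X ω))) *ᵥ a - a ⬝ᵥ a := by
    intro a
    obtain ⟨v, hpow, -, hlog, hone⟩ := herm_repr_full hMh a
    have hM1 : a ⬝ᵥ (mExp P (fun ω => matExp (u • X ω))) *ᵥ a
        = ∑ i, hMh.eigenvalues i * v i ^ 2 := by
      simpa [pow_one] using hpow 1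
    rw [hlog, hM1, hone, ← Finset.sum_sub_distrib]
    refine Finset.sum_le_sum fun i _ => ?_
    have hmu : 0 < hMh.eigenvalues i := hMpd.eigenvalues_pos i
    calc Real.log (hMh.eigenvalues i) * v i ^ 2
        ≤ (hMh.eigenvalues i - 1) * v i ^ 2 :=
          mul_le_mul_of_nonneg_right (Real.log_le_sub_one_of_pos hmu) (sq_nonneg _)
      _ = hMh.eigenvalues i * v i ^ 2 - v i ^ 2 := by ring
  -- Assemble
  refine Matrix.PosSemidef.of_dotProduct_mulVec_nonneg (((herm_smul hEXh u).add (herm_smul hV.1 _)).sub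
    (matLog_herm hMh)) fun x => ?_
  rw [hstar x]
  simp only [Matrix.sub_mulVec, Matrix.add_mulVec, Matrix.smul_mulVec,
    dotProduct_sub, dotProduct_add, dotProduct_smul, smul_eq_mul]
  have h1 := step1 x
  have h2 := step2 x
  linarith
end

section
/- Let ξ₁,…,ξₙ be i.i.d. standard normal real random variables and let S = Σ_{k=1}^n ξ_k² (so S follows the chi-square distribution with n degrees of freedom). Then for every θ ≥ 0, Pr{ (1/n)S − 1 ≥ √(4θ/n) + 2θ/n } ≤ exp(−θ) and Pr{ 1 − (1/n)S ≥ √(4θ/n) + 2θ/n } ≤ exp(−θ). -/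
open MeasureTheory ProbabilityTheory
open scoped ENNReal NNReal Real

private lemma log_le_half_sub_inv {x : ℝ} (hx : 1 ≤ x) :
    Real.log x ≤ (x - x⁻¹) / 2 := by
  set f : ℝ → ℝ := fun y => (y - y⁻¹) / 2 - Real.log y with hf
  have hderiv : ∀ y ∈ interior (Set.Ici (1:ℝ)),
      HasDerivAt f ((1 - -(y^2)⁻¹)/2 - y⁻¹) y := by
    intro y hy
    rw [interior_Ici] at hy
    have hy0 : (y:ℝ) ≠ 0 := by
      have : (1:ℝ) < y := hy
      linarith
    exact (((hasDerivAt_id y).sub (hasDerivAt_inv hy0)).div_const 2).sub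
      (Real.hasDerivAt_log hy0)
  have key : MonotoneOn f (Set.Ici 1) := by
    apply monotoneOn_of_deriv_nonneg (convex_Ici 1)
    · apply ContinuousOn.sub
      · exact (ContinuousOn.sub continuousOn_id (ContinuousOn.inv₀ continuousOn_id
          (fun y hy => by
            have h1 : (1:ℝ) ≤ y := hy
            simp only [id]
            intro h
            rw [h] at h1
            linarith))).div_const 2
      · exact Real.continuousOn_log.mono (fun y hy => by
          have h1 : (1:ℝ) ≤ y := hy
          simp only [Set.mem_compl_iff, Set.mem_singleton_iff]
          intro h
          rw [h] at h1
          linarith)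
    · intro y hy
      exact (hderiv y hy).differentiableAt.differentiableWithinAt
    · intro y hy
      rw [(hderiv y hy).deriv]
      rw [interior_Ici] at hy
      have hy1 : (1:ℝ) < y := hy
      have hy0 : (0:ℝ) < y := by linarith
      have heq : (1 - -(y^2)⁻¹)/2 - y⁻¹ = (y - 1)^2 / (2 * y^2) := by
        field_simp
        ring
      rw [heq]
      positivity
  have h := key (Set.mem_Ici.mpr le_rfl) (Set.mem_Ici.mpr hx) hx
  simp only [hf, Real.log_one, inv_one, sub_self, zero_div, sub_zero] at h
  linarith

private lemma sub_sq_half_le_log {s : ℝ} (hs : 0 ≤ s) :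
    s - s^2 / 2 ≤ Real.log (1 + s) := by
  set g : ℝ → ℝ := fun y => Real.log (1 + y) - y + y^2/2 with hg
  have hderiv : ∀ y ∈ interior (Set.Ici (0:ℝ)),
      HasDerivAt g (1/(1+y) - 1 + ((2:ℕ) * y^1)/2) y := by
    intro y hy
    rw [interior_Ici] at hy
    have hy0 : (0:ℝ) < y := hy
    have h1y : (1:ℝ) + y ≠ 0 := by linarith
    have hlog : HasDerivAt (fun y : ℝ => Real.log (1 + y)) (1/(1+y)) y := by
      have := (HasDerivAt.const_add 1 (hasDerivAt_id y)).log h1y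
      simpa using this
    exact (hlog.sub (hasDerivAt_id y)).add ((hasDerivAt_pow 2 y).div_const 2)
  have key : MonotoneOn g (Set.Ici 0) := by
    apply monotoneOn_of_deriv_nonneg (convex_Ici 0)
    · apply ContinuousOn.add
      · apply ContinuousOn.sub
        · apply Real.continuousOn_log.comp (Continuous.continuousOn (by continuity))
          intro y hy
          have h0 : (0:ℝ) ≤ y := hy
          simp only [Set.mem_compl_iff, Set.mem_singleton_iff]
          intro h
          linarith
        · exact continuousOn_id
      · exact (continuousOn_pow 2).div_const 2
    · intro y hy
      exact (hderiv y hy).differentiableAt.differentiableWithinAt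
    · intro y hy
      rw [(hderiv y hy).deriv]
      rw [interior_Ici] at hy
      have hy0 : (0:ℝ) < y := hy
      have heq : 1/(1+y) - 1 + ((2:ℕ) * y^1)/2 = y^2 / (1+y) := by
        push_cast
        field_simp
        ring
      rw [heq]
      positivity
  have h := key (Set.mem_Ici.mpr le_rfl) (Set.mem_Ici.mpr hs) hs
  simp only [hg] at h
  norm_num at h
  nlinarith [h]

private lemma gauss_smul_eq (t : ℝ) :
    (fun x : ℝ => ((gaussianPDFReal 0 1 x).toNNReal : ℝ≥0) • Real.exp (t * x^2))
      = fun x : ℝ => (Real.sqrt (2*Real.pi))⁻¹ * Real.exp (-(1/2 - t) * x^2) := by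
  funext x
  have h0 : 0 ≤ gaussianPDFReal 0 1 x := gaussianPDFReal_nonneg _ _ _
  rw [NNReal.smul_def, Real.coe_toNNReal _ h0]
  simp only [gaussianPDFReal, NNReal.coe_one, mul_one, sub_zero]
  rw [smul_eq_mul, mul_assoc, ← Real.exp_add]
  congr 1
  ring

private lemma gaussianPDF_eq_toNNReal :
    gaussianPDF 0 1 = fun x => (((gaussianPDFReal 0 1 x).toNNReal : ℝ≥0) : ℝ≥0∞) := rfl

private lemma integrable_exp_sq_gaussian {t : ℝ} (ht : t < 1/2) :
    Integrable (fun x => Real.exp (t * x^2)) (gaussianReal 0 1) := by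
  have hb : (0:ℝ) < 1/2 - t := by linarith
  rw [gaussianReal_of_var_ne_zero 0 one_ne_zero, gaussianPDF_eq_toNNReal,
    integrable_withDensity_iff_integrable_smul
      ((measurable_gaussianPDFReal 0 1).real_toNNReal)]
  rw [gauss_smul_eq t]
  exact (integrable_exp_neg_mul_sq hb).const_mul _

private lemma integral_exp_sq_gaussian {t : ℝ} (ht : t < 1/2) :
    ∫ x, Real.exp (t * x^2) ∂(gaussianReal 0 1) = (Real.sqrt (1 - 2*t))⁻¹ := by
  have hb : (0:ℝ) < 1/2 - t := by linarith
  rw [gaussianReal_of_var_ne_zero 0 one_ne_zero, gaussianPDF_eq_toNNReal,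
    integral_withDensity_eq_integral_smul
      ((measurable_gaussianPDFReal 0 1).real_toNNReal)]
  rw [gauss_smul_eq t]
  rw [MeasureTheory.integral_const_mul]
  have hg : ∫ x : ℝ, Real.exp (-(1/2 - t) * x^2) = Real.sqrt (Real.pi / (1/2 - t)) := by
    simpa using integral_gaussian (1/2 - t)
  rw [hg]
  rw [Real.sqrt_div Real.pi_pos.le, Real.sqrt_mul (by norm_num : (0:ℝ) ≤ 2)]
  have h12 : 1 - 2*t = 2 * (1/2 - t) := by ring
  rw [h12, Real.sqrt_mul (by norm_num : (0:ℝ) ≤ 2)]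
  have hπ : (0:ℝ) < Real.sqrt Real.pi := Real.sqrt_pos.mpr Real.pi_pos
  have hbs : (0:ℝ) < Real.sqrt (1/2 - t) := Real.sqrt_pos.mpr hb
  have h2 : (0:ℝ) < Real.sqrt 2 := Real.sqrt_pos.mpr (by norm_num)
  field_simp

private lemma mgf_sq_gaussian {Ω : Type*} [MeasurableSpace Ω] {P : Measure Ω} {X : Ω → ℝ}
    (hX : Measurable X) (hd : P.map X = gaussianReal 0 1) {t : ℝ} (ht : t < 1/2) :
    mgf (fun ω => X ω ^ 2) P t = (Real.sqrt (1 - 2*t))⁻¹ ∧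
      Integrable (fun ω => Real.exp (t * X ω ^ 2)) P := by
  have hsm : AEStronglyMeasurable (fun x : ℝ => Real.exp (t * x^2)) (P.map X) :=
    (Measurable.exp (measurable_const.mul (measurable_id.pow_const 2))).aestronglyMeasurable
  constructor
  · have h1 : ∫ ω, Real.exp (t * X ω ^ 2) ∂P
        = ∫ x, Real.exp (t * x^2) ∂(P.map X) :=
      (integral_map hX.aemeasurable hsm).symm
    rw [mgf]
    rw [show (fun ω => Real.exp (t * (fun ω => X ω ^ 2) ω)) = fun ω => Real.exp (t * X ω ^ 2)
      from rfl]
    rw [h1, hd]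
    exact integral_exp_sq_gaussian ht
  · have h := integrable_exp_sq_gaussian ht
    rw [← hd] at h
    exact (integrable_map_measure hsm hX.aemeasurable).mp h

/-- Specialization of the Wishart tail bound to `d = 1`, `C = 1`: two-sided tail bound
for the chi-square statistic `S = ∑ ξ_k²` of `n` i.i.d. standard Gaussians. -/
theorem chi_square_tail_bound
    {Ω : Type*} [MeasurableSpace Ω] (P : Measure Ω) [IsProbabilityMeasure P]
    {n : ℕ} (hn : 0 < n)
    (ξ : Fin n → Ω → ℝ) (hmeas : ∀ k, Measurable (ξ k))
    (hindep : iIndepFun ξ P)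
    (hdist : ∀ k, P.map (ξ k) = gaussianReal 0 1)
    (S : Ω → ℝ) (hS : S = fun ω => ∑ k, (ξ k ω) ^ 2)
    (θ : ℝ) (hθ : 0 ≤ θ) :
    P {ω | (n : ℝ)⁻¹ * S ω - 1 ≥ Real.sqrt (4 * θ / n) + 2 * θ / n} ≤
        ENNReal.ofReal (Real.exp (-θ)) ∧
    P {ω | 1 - (n : ℝ)⁻¹ * S ω ≥ Real.sqrt (4 * θ / n) + 2 * θ / n} ≤
        ENNReal.ofReal (Real.exp (-θ)) := by
  have hnR : (0:ℝ) < n := Nat.cast_pos.mpr hn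
  set u : ℝ := Real.sqrt (θ / n) with hu
  have hu0 : 0 ≤ u := Real.sqrt_nonneg _
  have hu2 : u^2 = θ / n := Real.sq_sqrt (div_nonneg hθ hnR.le)
  have hθn : θ = n * u^2 := by
    rw [hu2]
    field_simp
  have ha : Real.sqrt (4*θ/(n:ℝ)) + 2*θ/(n:ℝ) = 2*u + 2*u^2 := by
    have h4 : 4*θ/(n:ℝ) = 2^2 * (θ/n) := by ring
    have h2 : 2*θ/(n:ℝ) = 2*u^2 := by rw [hu2]; ring
    rw [h4, Real.sqrt_mul (by positivity : (0:ℝ) ≤ 2^2), Real.sqrt_sq (by norm_num : (0:ℝ) ≤ 2),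
      h2, ← hu]
  have hA : (0:ℝ) < 1 + 2*u := by linarith
  -- independence and measurability of the squares
  have hmeasY : ∀ k : Fin n, Measurable (fun ω => ξ k ω ^ 2) :=
    fun k => (hmeas k).pow_const 2
  have hindepY : iIndepFun (fun k => fun ω => ξ k ω ^ 2) P :=
    hindep.comp (fun _ => fun x : ℝ => x ^ 2) (fun _ => measurable_id.pow_const 2)
  have hSsum : S = ∑ k : Fin n, (fun ω => ξ k ω ^ 2) := by
    rw [hS]
    funext ω
    simp [Finset.sum_apply]
  -- generic Chernoff ingredients for any t < 1/2
  have hmgfS : ∀ t : ℝ, t < 1/2 → mgf S P t = ((Real.sqrt (1 - 2*t))⁻¹)^n := by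
    intro t ht
    rw [hSsum, hindepY.mgf_sum hmeasY Finset.univ]
    calc ∏ k : Fin n, mgf (fun ω => ξ k ω ^ 2) P t
        = ∏ _k : Fin n, (Real.sqrt (1 - 2*t))⁻¹ :=
          Finset.prod_congr rfl (fun k _ => (mgf_sq_gaussian (hmeas k) (hdist k) ht).1)
      _ = ((Real.sqrt (1 - 2*t))⁻¹)^n := by simp
  have hintS : ∀ t : ℝ, t < 1/2 → Integrable (fun ω => Real.exp (t * S ω)) P := by
    intro t ht
    rw [hSsum]
    exact hindepY.integrable_exp_mul_sum hmeasY
      (fun k _ => (mgf_sq_gaussian (hmeas k) (hdist k) ht).2)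
  constructor
  · -- upper tail
    set t : ℝ := u / (1 + 2*u) with htdef
    have ht0 : 0 ≤ t := div_nonneg hu0 hA.le
    have ht : t < 1/2 := by
      rw [htdef, div_lt_iff₀ hA]
      linarith
    have h1m2t : 1 - 2*t = (1 + 2*u)⁻¹ := by
      rw [htdef]
      field_simp
      ring
    set ε : ℝ := (2*u + 2*u^2 + 1) * n with hεdef
    have hset1 : {ω | (n:ℝ)⁻¹ * S ω - 1 ≥ Real.sqrt (4*θ/(n:ℝ)) + 2*θ/(n:ℝ)}
        = {ω | ε ≤ S ω} := by
      ext ω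
      simp only [Set.mem_setOf_eq, ge_iff_le]
      rw [ha, le_sub_iff_add_le, inv_mul_eq_div, le_div_iff₀ hnR, hεdef]
    have hkey : Real.sqrt (1 + 2*u) ≤ Real.exp (u*(1+u)/(1+2*u)) := by
      have hlog : Real.log (1 + 2*u) ≤ 2*(u*(1+u)/(1+2*u)) := by
        have h1 := log_le_half_sub_inv (x := 1 + 2*u) (by linarith)
        have heq : ((1+2*u) - (1+2*u)⁻¹)/2 = 2*(u*(1+u)/(1+2*u)) := by
          field_simp
          ring
        linarith [heq ▸ h1]
      have hexp : 1 + 2*u ≤ Real.exp (2*(u*(1+u)/(1+2*u))) := by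
        calc 1 + 2*u = Real.exp (Real.log (1 + 2*u)) := (Real.exp_log hA).symm
          _ ≤ _ := Real.exp_le_exp.mpr hlog
      calc Real.sqrt (1 + 2*u) ≤ Real.sqrt (Real.exp (2*(u*(1+u)/(1+2*u)))) :=
            Real.sqrt_le_sqrt hexp
        _ = Real.exp (u*(1+u)/(1+2*u)) := by
            rw [show (2:ℝ)*(u*(1+u)/(1+2*u)) = u*(1+u)/(1+2*u) + u*(1+u)/(1+2*u) from by ring,
              Real.exp_add, ← sq, Real.sqrt_sq (Real.exp_nonneg _)]
    have hbound : Real.exp (-t*ε) * mgf S P t ≤ Real.exp (-θ) := by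
      rw [hmgfS t ht, h1m2t, Real.sqrt_inv, inv_inv]
      calc Real.exp (-t*ε) * (Real.sqrt (1 + 2*u))^n
          ≤ Real.exp (-t*ε) * (Real.exp (u*(1+u)/(1+2*u)))^n := by
            exact mul_le_mul_of_nonneg_left
              (pow_le_pow_left₀ (Real.sqrt_nonneg _) hkey n) (Real.exp_nonneg _)
        _ = Real.exp ((n:ℝ) * (u*(1+u)/(1+2*u)) + -t*ε) := by
            rw [← Real.exp_nat_mul, ← Real.exp_add, add_comm]
        _ = Real.exp (-θ) := by
            congr 1
            rw [hθn, htdef, hεdef]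
            field_simp
            ring
    rw [hset1]
    have hch := measure_ge_le_exp_mul_mgf (μ := P) (X := S) ε ht0 (hintS t ht)
    calc P {ω | ε ≤ S ω} = ENNReal.ofReal ((P {ω | ε ≤ S ω}).toReal) :=
          (ENNReal.ofReal_toReal (measure_ne_top _ _)).symm
      _ ≤ ENNReal.ofReal (Real.exp (-θ)) :=
          ENNReal.ofReal_le_ofReal (le_trans hch hbound)
  · -- lower tail
    have ht : -u < 1/2 := by linarith
    have ht0 : -u ≤ (0:ℝ) := by linarith
    set ε : ℝ := (1 - (2*u + 2*u^2)) * n with hεdef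
    have hset2 : {ω | 1 - (n:ℝ)⁻¹ * S ω ≥ Real.sqrt (4*θ/(n:ℝ)) + 2*θ/(n:ℝ)}
        = {ω | S ω ≤ ε} := by
      ext ω
      simp only [Set.mem_setOf_eq, ge_iff_le]
      rw [ha, le_sub_iff_add_le, add_comm, ← le_sub_iff_add_le, inv_mul_eq_div,
        div_le_iff₀ hnR, hεdef]
    have hkey : (Real.sqrt (1 + 2*u))⁻¹ ≤ Real.exp (-(u - u^2)) := by
      have hlog : 2*(u - u^2) ≤ Real.log (1 + 2*u) := by
        have h1 := sub_sq_half_le_log (s := 2*u) (by linarith)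
        nlinarith [h1]
      have hexp : Real.exp (2*(u - u^2)) ≤ 1 + 2*u := by
        calc Real.exp (2*(u - u^2)) ≤ Real.exp (Real.log (1 + 2*u)) :=
              Real.exp_le_exp.mpr hlog
          _ = 1 + 2*u := Real.exp_log hA
      have hsqrt : Real.exp (u - u^2) ≤ Real.sqrt (1 + 2*u) := by
        rw [Real.le_sqrt (Real.exp_nonneg _) (by linarith)]
        calc Real.exp (u - u^2) ^ 2 = Real.exp (2*(u - u^2)) := by
              rw [sq, ← Real.exp_add]
              congr 1
              ring
          _ ≤ 1 + 2*u := hexp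
      rw [Real.exp_neg]
      exact inv_anti₀ (Real.exp_pos _) hsqrt
    have hbound : Real.exp (-(-u)*ε) * mgf S P (-u) ≤ Real.exp (-θ) := by
      have h1m2t : 1 - 2*(-u) = 1 + 2*u := by ring
      rw [hmgfS (-u) ht, h1m2t]
      calc Real.exp (-(-u)*ε) * ((Real.sqrt (1 + 2*u))⁻¹)^n
          ≤ Real.exp (-(-u)*ε) * (Real.exp (-(u - u^2)))^n := by
            exact mul_le_mul_of_nonneg_left
              (pow_le_pow_left₀ (by positivity) hkey n) (Real.exp_nonneg _)
        _ = Real.exp ((n:ℝ) * (-(u - u^2)) + -(-u)*ε) := by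
            rw [← Real.exp_nat_mul, ← Real.exp_add, add_comm]
        _ ≤ Real.exp (-θ) := by
            apply Real.exp_le_exp.mpr
            have hcube : (0:ℝ) ≤ (n:ℝ) * u^3 := by positivity
            have hid : (n:ℝ) * (-(u - u^2)) + -(-u)*ε = -θ - 2*(n:ℝ)*u^3 := by
              rw [hθn, hεdef]
              ring
            rw [hid]
            linarith
    rw [hset2]
    have hch := measure_le_le_exp_mul_mgf (μ := P) (X := S) ε ht0 (hintS (-u) ht)
    calc P {ω | S ω ≤ ε} = ENNReal.ofReal ((P {ω | S ω ≤ ε}).toReal) :=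
          (ENNReal.ofReal_toReal (measure_ne_top _ _)).symm
      _ ≤ ENNReal.ofReal (Real.exp (-θ)) :=
          ENNReal.ofReal_le_ofReal (le_trans hch hbound)
end
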